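/- arXiv:1507.07144 — 6 statements merged into one kernel-verified Lean document; each statement's English description precedes it below -/
import Mathlib

section
/- Let f : ℝⁿ → ℝ ∪ {∞} be proper and lower semicontinuous. Then f attains a strong minimum at x̄ if and only if its Moreau envelope e₁f attains a strong minimum at x̄. -/
open Filter Topology

/-- The Moreau envelope with parameter 1 of an extended-real-valued function. -/
noncomputable def moreauEnv {n : ℕ} (f : EuclideanSpace ℝ (Fin n) → EReal) :
    EuclideanSpace ℝ (Fin n) → EReal :=
  fun x => ⨅ y, f y + (((1 / 2 : ℝ) * ‖y - x‖ ^ 2 : ℝ) : EReal)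

/-- `f` is proper: nowhere `-∞` and somewhere finite. -/
def ProperFn {n : ℕ} (f : EuclideanSpace ℝ (Fin n) → EReal) : Prop :=
  (∀ x, f x ≠ ⊥) ∧ ∃ x, f x ≠ ⊤

/-- Convexity for extended-real-valued functions. -/
def ConvexFn {n : ℕ} (f : EuclideanSpace ℝ (Fin n) → EReal) : Prop :=
  ∀ x y : EuclideanSpace ℝ (Fin n), ∀ a b : ℝ, 0 ≤ a → 0 ≤ b → a + b = 1 →
    f (a • x + b • y) ≤ (a : EReal) * f x + (b : EReal) * f y

/-- `f` is strongly convex: `f - (σ/2)‖·‖²` is convex for some `σ > 0`. -/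
def StronglyConvexFn {n : ℕ} (f : EuclideanSpace ℝ (Fin n) → EReal) : Prop :=
  ∃ σ : ℝ, 0 < σ ∧ ConvexFn (fun x => f x - ((σ / 2 * ‖x‖ ^ 2 : ℝ) : EReal))

/-- `f` is (super)coercive: `liminf f(x)/‖x‖ = ∞` as `‖x‖ → ∞`, phrased as:
for every slope `c`, eventually (as `‖x‖ → ∞`) `f x ≥ c‖x‖`. -/
def CoerciveFn {n : ℕ} (f : EuclideanSpace ℝ (Fin n) → EReal) : Prop :=
  ∀ c : ℝ, ∀ᶠ x : EuclideanSpace ℝ (Fin n) in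
    Filter.comap (fun x => ‖x‖) Filter.atTop, ((c * ‖x‖ : ℝ) : EReal) ≤ f x

/-- `f` attains a strong minimum at `x̄`: `x̄` is a global minimizer and every
minimizing sequence converges to `x̄`. -/
def StrongMinAt {n : ℕ} (f : EuclideanSpace ℝ (Fin n) → EReal)
    (xbar : EuclideanSpace ℝ (Fin n)) : Prop :=
  (∀ x, f xbar ≤ f x) ∧
    ∀ u : ℕ → EuclideanSpace ℝ (Fin n),
      Tendsto (fun k => f (u k)) atTop (nhds (f xbar)) → Tendsto u atTop (nhds xbar)

/-!
Since `e₁f ≤ f` and `e₁f ≥ inf f`, both functions have the same infimum. If `e₁f` has a strong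
minimum at `x̄`, a minimizing sequence of `f` is one of `e₁f`, so it converges to `x̄`, and lower
semicontinuity makes `x̄` a minimizer of `f`; minimizing sequences of `f` are then minimizing for
`e₁f`. Conversely, a strong minimum is characterized by the sublevel sets `{g < min g + δ}`
shrinking to `x̄`, and a point `x` with `e₁f x < min f + δ` has a point `y` with `f y < min f + δ`
and `‖y - x‖² < 2δ`.
-/

theorem LowerSemicontinuous.le_of_tendsto {X ι γ : Type*} [TopologicalSpace X] [LinearOrder γ]
    [DenselyOrdered γ] [TopologicalSpace γ] [OrderClosedTopology γ] {g : X → γ}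
    (hg : LowerSemicontinuous g) {l : Filter ι} [l.NeBot] {u : ι → X} {x : X} {c : γ}
    (hu : Tendsto u l (𝓝 x)) (hgu : Tendsto (g ∘ u) l (𝓝 c)) : g x ≤ c :=
  le_of_forall_lt_imp_le_of_dense fun _ hb =>
    ge_of_tendsto hgu ((hu.eventually (hg x _ hb)).mono fun _ h => h.le)

section MoreauEnvelope

variable {n : ℕ} {f : EuclideanSpace ℝ (Fin n) → EReal}

theorem strongMinAt_iff_forall_dist_lt {g : EuclideanSpace ℝ (Fin n) → EReal}
    {xbar : EuclideanSpace ℝ (Fin n)} {m : ℝ} (hm : g xbar = m) :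
    StrongMinAt g xbar ↔ (∀ x, g xbar ≤ g x) ∧
      ∀ ε > 0, ∃ δ > 0, ∀ x, g x < (m + δ : ℝ) → dist x xbar < ε := by
  refine and_congr_right fun hmin => ⟨fun hseq ε hε => ?_, fun hwp u hu => ?_⟩
  · by_contra! h
    choose x hx hεx using fun k : ℕ => h (1 / (k + 1)) Nat.one_div_pos_of_nat
    have hgx : Tendsto (g ∘ x) atTop (𝓝 (g xbar)) := by
      rw [hm]
      refine tendsto_of_tendsto_of_tendsto_of_le_of_le tendsto_const_nhds ?_
        (fun k => hm ▸ hmin (x k)) (fun k => (hx k).le)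
      exact EReal.tendsto_coe.2 <| by
        simpa using tendsto_const_nhds.add (tendsto_one_div_add_atTop_nhds_zero_nat (𝕜 := ℝ))
    obtain ⟨k, hk⟩ := ((hseq x hgx).eventually (Metric.ball_mem_nhds xbar hε)).exists
    exact (hεx k).not_gt hk
  · rw [hm] at hu
    refine Metric.tendsto_atTop.2 fun ε hε => ?_
    obtain ⟨δ, hδ, hsub⟩ := hwp ε hε
    have hlt : (m : EReal) < (m + δ : ℝ) := EReal.coe_lt_coe_iff.2 (lt_add_of_pos_right m hδ)
    exact eventually_atTop.1 ((hu.eventually_lt_const hlt).mono fun k hk => hsub _ hk)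

theorem moreauEnv_le (x : EuclideanSpace ℝ (Fin n)) : moreauEnv f x ≤ f x :=
  (iInf_le _ x).trans_eq (by simp)

theorem le_moreauEnv {a : EReal} (h : ∀ y, a ≤ f y) (x : EuclideanSpace ℝ (Fin n)) :
    a ≤ moreauEnv f x :=
  le_iInf fun y => (h y).trans (le_add_of_nonneg_right (EReal.coe_nonneg.2 (by positivity)))

theorem iInf_moreauEnv : ⨅ x, moreauEnv f x = ⨅ x, f x :=
  le_antisymm (iInf_mono moreauEnv_le) (le_iInf (le_moreauEnv (iInf_le f)))

theorem exists_near_of_moreauEnv_lt {m δ : ℝ} (hm : ∀ y, (m : EReal) ≤ f y)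
    {x : EuclideanSpace ℝ (Fin n)} (hx : moreauEnv f x < (m + δ : ℝ)) :
    ∃ y, f y < (m + δ : ℝ) ∧ ‖y - x‖ ^ 2 < 2 * δ := by
  obtain ⟨y, hy⟩ := iInf_lt_iff.1 hx
  refine ⟨y, (le_add_of_nonneg_right (EReal.coe_nonneg.2 (by positivity))).trans_lt hy, ?_⟩
  have hlt : ((m + 1 / 2 * ‖y - x‖ ^ 2 : ℝ) : EReal) < (m + δ : ℝ) := by
    rw [EReal.coe_add]
    exact (add_le_add_left (hm y) _).trans_lt hy
  linarith [EReal.coe_lt_coe_iff.1 hlt]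

theorem tendsto_moreauEnv_iInf {u : ℕ → EuclideanSpace ℝ (Fin n)}
    (hu : Tendsto (f ∘ u) atTop (𝓝 (⨅ x, f x))) :
    Tendsto (moreauEnv f ∘ u) atTop (𝓝 (⨅ x, f x)) :=
  tendsto_of_tendsto_of_tendsto_of_le_of_le tendsto_const_nhds hu
    (fun k => iInf_moreauEnv (f := f) ▸ iInf_le _ (u k)) (fun k => moreauEnv_le (u k))

theorem strongMinAt_moreauEnv {xbar : EuclideanSpace ℝ (Fin n)} (hf : ProperFn f)
    (h : StrongMinAt f xbar) : StrongMinAt (moreauEnv f) xbar := by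
  obtain ⟨hbot, x₀, hx₀⟩ := hf
  have hm : f xbar = (f xbar).toReal :=
    (EReal.coe_toReal (ne_top_of_le_ne_top hx₀ (h.1 x₀)) (hbot xbar)).symm
  set m := (f xbar).toReal
  have hmin : ∀ y, (m : EReal) ≤ f y := hm ▸ h.1
  have henv : moreauEnv f xbar = m :=
    le_antisymm (hm ▸ moreauEnv_le xbar) (le_moreauEnv hmin xbar)
  obtain ⟨-, hwp⟩ := (strongMinAt_iff_forall_dist_lt hm).1 h
  refine (strongMinAt_iff_forall_dist_lt henv).2
    ⟨fun x => henv ▸ le_moreauEnv hmin x, fun ε hε => ?_⟩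
  obtain ⟨δ, hδ, hsub⟩ := hwp (ε / 2) (half_pos hε)
  refine ⟨min δ (ε ^ 2 / 8), by positivity, fun x hx => ?_⟩
  obtain ⟨y, hfy, hyx⟩ := exists_near_of_moreauEnv_lt hmin hx
  have hy : dist y xbar < ε / 2 :=
    hsub y (hfy.trans_le (EReal.coe_le_coe_iff.2 (by simp)))
  have hxy : dist x y < ε / 2 := by
    rw [dist_eq_norm, norm_sub_rev]
    nlinarith [min_le_right δ (ε ^ 2 / 8), norm_nonneg (y - x)]
  linarith [dist_triangle x y xbar]

theorem strongMinAt_of_strongMinAt_moreauEnv {xbar : EuclideanSpace ℝ (Fin n)}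
    (hf : LowerSemicontinuous f) (h : StrongMinAt (moreauEnv f) xbar) : StrongMinAt f xbar := by
  have henv : moreauEnv f xbar = ⨅ x, f x := by
    rw [← iInf_moreauEnv]
    exact le_antisymm (le_iInf h.1) (iInf_le _ _)
  obtain ⟨v, -, hv, hvf⟩ := exists_seq_tendsto_sInf (Set.range_nonempty f) (OrderBot.bddBelow _)
  choose y hy using hvf
  have hfy : Tendsto (f ∘ y) atTop (𝓝 (⨅ x, f x)) := by
    simpa [Function.comp_def, hy, sInf_range] using hv
  have hyx : Tendsto y atTop (𝓝 xbar) := h.2 y (henv ▸ tendsto_moreauEnv_iInf hfy)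
  have hfx : f xbar = ⨅ x, f x := le_antisymm (hf.le_of_tendsto hyx hfy) (iInf_le f xbar)
  refine ⟨fun x => hfx ▸ iInf_le f x, fun u hu => h.2 u ?_⟩
  rw [hfx] at hu
  exact henv ▸ tendsto_moreauEnv_iInf hu

end MoreauEnvelope

theorem strongMin_iff_moreau_strongMin {n : ℕ}
    (f : EuclideanSpace ℝ (Fin n) → EReal)
    (hproper : ProperFn f) (hlsc : LowerSemicontinuous f)
    (xbar : EuclideanSpace ℝ (Fin n)) :
    StrongMinAt f xbar ↔ StrongMinAt (moreauEnv f) xbar :=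
  ⟨strongMinAt_moreauEnv hproper, strongMinAt_of_strongMinAt_moreauEnv hlsc⟩
end

section
/- Let f : ℝⁿ → ℝ ∪ {∞} be proper, lower semicontinuous, and convex. Then f has a strong minimizer if and only if f has a unique minimizer. -/
open Filter Topology

/-! A minimizer `x̄` of a convex `f` dominates, on every sphere around `x̄`, the values of `f`
outside that sphere: the segment from `x̄` to a far point `x` crosses the sphere at a point
where `f` is at most `f x`. If `f` is lower semicontinuous, it attains its minimum on the compact
sphere, and for the unique minimizer this minimum exceeds `f x̄`. A minimizing sequence therefore
eventually stays inside every sphere around `x̄`. -/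

lemma EReal.coe_mul_add_coe_mul_le {a b : ℝ} {p q : EReal} (ha : 0 ≤ a) (hb : 0 ≤ b)
    (hab : a + b = 1) (hqp : q ≤ p) : (a : EReal) * p + (b : EReal) * q ≤ p :=
  calc (a : EReal) * p + (b : EReal) * q ≤ (a : EReal) * p + (b : EReal) * p := by gcongr
    _ = p := by
        rw [← EReal.right_distrib_of_nonneg (by exact_mod_cast ha) (by exact_mod_cast hb),
          ← EReal.coe_add, hab, EReal.coe_one, one_mul]

section

variable {n : ℕ} {f : EuclideanSpace ℝ (Fin n) → EReal}

theorem StrongMinAt.eq_of_le {xbar y : EuclideanSpace ℝ (Fin n)} (h : StrongMinAt f xbar)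
    (hy : f y ≤ f xbar) : y = xbar :=
  tendsto_const_nhds_iff.1 <| h.2 (fun _ => y) <| by
    simpa only [le_antisymm hy (h.1 y)] using tendsto_const_nhds

theorem ConvexFn.exists_mem_sphere_le (hconv : ConvexFn f) {xbar x : EuclideanSpace ℝ (Fin n)}
    (hx : f xbar ≤ f x) {ε : ℝ} (hε : 0 ≤ ε) (hεx : ε ≤ dist x xbar) :
    ∃ y ∈ Metric.sphere xbar ε, f y ≤ f x := by
  set t := ε / dist x xbar
  have ht₀ : 0 ≤ t := div_nonneg hε dist_nonneg
  have ht₁ : t ≤ 1 := div_le_one_of_le₀ hεx dist_nonneg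
  refine ⟨t • x + (1 - t) • xbar, ?_, ?_⟩
  · have hsub : t • x + (1 - t) • xbar - xbar = t • (x - xbar) := by module
    rw [mem_sphere_iff_norm, hsub, norm_smul, Real.norm_of_nonneg ht₀, ← dist_eq_norm,
      div_mul_cancel_of_imp fun h => le_antisymm (h ▸ hεx) hε]
  · calc f (t • x + (1 - t) • xbar) ≤ (t : EReal) * f x + ((1 - t : ℝ) : EReal) * f xbar :=
          hconv x xbar t (1 - t) ht₀ (sub_nonneg.2 ht₁) (add_sub_cancel t 1)
      _ ≤ f x := EReal.coe_mul_add_coe_mul_le ht₀ (sub_nonneg.2 ht₁) (add_sub_cancel t 1) hx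

theorem strongMinAt_of_forall_le_of_unique (hlsc : LowerSemicontinuous f) (hconv : ConvexFn f)
    {xbar : EuclideanSpace ℝ (Fin n)} (hmin : ∀ x, f xbar ≤ f x)
    (huniq : ∀ y, (∀ x, f y ≤ f x) → y = xbar) : StrongMinAt f xbar := by
  refine ⟨hmin, fun u hu => Metric.tendsto_nhds.2 fun ε hε => ?_⟩
  by_contra hnear
  have hfar : ∃ᶠ k in atTop, ε ≤ dist (u k) xbar := by
    simpa only [not_eventually, not_lt] using hnear
  obtain ⟨k₀, hk₀⟩ := hfar.exists
  obtain ⟨y₀, hy₀, -⟩ := hconv.exists_mem_sphere_le (hmin _) hε.le hk₀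
  obtain ⟨w, hw, hwmin⟩ :=
    (hlsc.lowerSemicontinuousOn _).exists_isMinOn ⟨y₀, hy₀⟩ (isCompact_sphere xbar ε)
  have hgap : f xbar < f w := by
    refine (hmin w).lt_of_ne fun hw_eq => ?_
    have := huniq w fun x => hw_eq ▸ hmin x
    simp [this, hε.ne] at hw
  obtain ⟨k, hk, hkfar⟩ := ((hu.eventually_lt_const hgap).and_frequently hfar).exists
  obtain ⟨y, hy, hyk⟩ := hconv.exists_mem_sphere_le (hmin _) hε.le hkfar
  exact (hwmin hy).not_gt (hyk.trans_lt hk)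

end

theorem strong_minimizer_iff_unique_minimizer_general {n : ℕ}
    (f : EuclideanSpace ℝ (Fin n) → EReal)
    (hlsc : LowerSemicontinuous f) (hconv : ConvexFn f) :
    (∃ xbar, StrongMinAt f xbar) ↔ (∃! xbar, ∀ x, f xbar ≤ f x) := by
  constructor
  · rintro ⟨xbar, hxbar⟩
    exact ⟨xbar, hxbar.1, fun y hy => hxbar.eq_of_le (hy xbar)⟩
  · rintro ⟨xbar, hmin, huniq⟩
    exact ⟨xbar, strongMinAt_of_forall_le_of_unique hlsc hconv hmin huniq⟩

theorem strong_minimizer_iff_unique_minimizer {n : ℕ}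
    (f : EuclideanSpace ℝ (Fin n) → EReal)
    (hproper : ProperFn f) (hlsc : LowerSemicontinuous f) (hconv : ConvexFn f) :
    (∃ xbar, StrongMinAt f xbar) ↔ (∃! xbar, ∀ x, f xbar ≤ f x) :=
  strong_minimizer_iff_unique_minimizer_general f hlsc hconv
end

section
/- Suppose f : ℝⁿ → ℝ ∪ {∞} is proper and lower semicontinuous, and for every m ∈ ℕ (m ≥ 1) there exists z_m ∈ ℝⁿ such that f(z_m) < inf_{‖x - z_m‖ ≥ 1/m} f(x). Then the sequence (z_m) is Cauchy, converges to some x̄ ∈ ℝⁿ, and f attains a strong minimum at x̄. -/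
open Filter Topology

/-!
Two points that are both strict minimizers of `f` outside balls of radii `r` and `s` lie at
distance less than `max r s` from each other, since each would otherwise beat the other.
Hence the localizing points `z m` form a Cauchy sequence, and lower semicontinuity passes the
localization to the limit `x̄`. For a minimizing sequence, `f (u k)` eventually drops below the
gap constant of some `z m` close to `x̄`, which forces `u k` into the small ball around `z m`.
-/

/-- The condition `f z < inf_{dist x z ≥ r} f x`, with the infimum replaced by a gap constant `c`
so that no completeness of the order is needed. -/
def MinGapOutsideBall {α β : Type*} [PseudoMetricSpace α] [LinearOrder β]
    (f : α → β) (z : α) (r : ℝ) : Prop :=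
  ∃ c, f z < c ∧ ∀ x, r ≤ dist x z → c ≤ f x

namespace MinGapOutsideBall

theorem of_lt_iInf_norm {E β : Type*} [SeminormedAddCommGroup E] [CompleteLinearOrder β]
    {f : E → β} {z : E} {r : ℝ}
    (h : f z < ⨅ x : {x : E // r ≤ ‖x - z‖}, f x) : MinGapOutsideBall f z r :=
  ⟨_, h, fun x hx => iInf_le_of_le ⟨x, by rwa [← dist_eq_norm]⟩ le_rfl⟩

variable {α β : Type*} [LinearOrder β]

section PseudoMetric

variable [PseudoMetricSpace α] {f : α → β}

theorem lt_of_le_dist {z x : α} {r : ℝ} (h : MinGapOutsideBall f z r) (hx : r ≤ dist x z) :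
    f z < f x :=
  let ⟨_, hzc, hc⟩ := h
  hzc.trans_le (hc x hx)

theorem dist_lt_max {a b : α} {r s : ℝ} (ha : MinGapOutsideBall f a r)
    (hb : MinGapOutsideBall f b s) : dist a b < max r s := by
  by_contra! h
  have hab : f a < f b := ha.lt_of_le_dist (by rw [dist_comm]; exact (le_max_left r s).trans h)
  exact hab.not_gt (hb.lt_of_le_dist ((le_max_right r s).trans h))

variable {z : ℕ → α} {r : ℕ → ℝ}

theorem cauchySeq (hr : Tendsto r atTop (𝓝 0))
    (hz : ∀ᶠ m in atTop, MinGapOutsideBall f (z m) (r m)) : CauchySeq z := by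
  rw [Metric.cauchySeq_iff']
  intro ε hε
  obtain ⟨N, hN⟩ := eventually_atTop.1 (hz.and (hr.eventually (gt_mem_nhds hε)))
  refine ⟨N, fun k hk => ?_⟩
  exact ((hN k hk).1.dist_lt_max (hN N le_rfl).1).trans_le
    (max_le (hN k hk).2.le (hN N le_rfl).2.le)

theorem tendsto_of_tendsto_apply [TopologicalSpace β] [ClosedIciTopology β] {xbar : α}
    (hr : Tendsto r atTop (𝓝 0)) (hz : ∀ᶠ m in atTop, MinGapOutsideBall f (z m) (r m))
    (hzx : Tendsto z atTop (𝓝 xbar)) (hmin : ∀ x, f xbar ≤ f x)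
    {ι : Type*} {l : Filter ι} {u : ι → α} (hu : Tendsto (fun k => f (u k)) l (𝓝 (f xbar))) :
    Tendsto u l (𝓝 xbar) := by
  rw [Metric.tendsto_nhds]
  intro ε hε
  have hsmall : ∀ᶠ m in atTop, r m + dist (z m) xbar < ε :=
    (hr.add (hzx.dist tendsto_const_nhds)).eventually (gt_mem_nhds (by simpa using hε))
  obtain ⟨m, ⟨c, hzc, hc⟩, hm⟩ := (hz.and hsmall).exists
  filter_upwards [hu.eventually_lt_const ((hmin (z m)).trans_lt hzc)] with k hk
  have hball : dist (u k) (z m) < r m := lt_of_not_ge fun h => (hc _ h).not_gt hk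
  calc dist (u k) xbar ≤ dist (u k) (z m) + dist (z m) xbar := dist_triangle _ _ _
    _ < ε := by linarith

end PseudoMetric

theorem le_of_tendsto [MetricSpace α] {f : α → β} {z : ℕ → α} {r : ℕ → ℝ} {xbar : α}
    (hf : LowerSemicontinuous f) (hr : Tendsto r atTop (𝓝 0))
    (hz : ∀ᶠ m in atTop, MinGapOutsideBall f (z m) (r m))
    (hzx : Tendsto z atTop (𝓝 xbar)) (x : α) : f xbar ≤ f x := by
  rcases eq_or_ne x xbar with rfl | hne
  · exact le_rfl
  have hfar : ∀ᶠ m in atTop, r m < dist (z m) x :=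
    hr.eventually_lt (hzx.dist tendsto_const_nhds) (by simpa [dist_comm] using hne.symm)
  refine le_of_forall_lt fun c hc => ?_
  obtain ⟨m, hcm, hgap, hm⟩ := ((hzx.eventually (hf xbar c hc)).and (hz.and hfar)).exists
  exact hcm.trans (hgap.lt_of_le_dist (by rw [dist_comm]; exact hm.le))

end MinGapOutsideBall

theorem strong_min_from_localization_general {n : ℕ}
    (f : EuclideanSpace ℝ (Fin n) → EReal)
    (hlsc : LowerSemicontinuous f)
    (z : ℕ → EuclideanSpace ℝ (Fin n))
    (hz : ∀ m : ℕ, 1 ≤ m →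
      f (z m) < ⨅ x : {x : EuclideanSpace ℝ (Fin n) // 1 / (m : ℝ) ≤ ‖x - z m‖}, f x) :
    CauchySeq z ∧ ∃ xbar, Tendsto z atTop (nhds xbar) ∧ StrongMinAt f xbar := by
  have hr : Tendsto (fun m : ℕ => 1 / (m : ℝ)) atTop (𝓝 0) :=
    tendsto_const_div_atTop_nhds_zero_nat 1
  have hgap : ∀ᶠ m in atTop, MinGapOutsideBall f (z m) (1 / (m : ℝ)) :=
    (eventually_ge_atTop 1).mono fun m hm => MinGapOutsideBall.of_lt_iInf_norm (hz m hm)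
  have hcauchy : CauchySeq z := MinGapOutsideBall.cauchySeq hr hgap
  obtain ⟨xbar, hzx⟩ := cauchySeq_tendsto_of_complete hcauchy
  have hmin : ∀ x, f xbar ≤ f x := MinGapOutsideBall.le_of_tendsto hlsc hr hgap hzx
  exact ⟨hcauchy, xbar, hzx, hmin, fun u hu =>
    MinGapOutsideBall.tendsto_of_tendsto_apply hr hgap hzx hmin hu⟩

theorem strong_min_from_localization {n : ℕ}
    (f : EuclideanSpace ℝ (Fin n) → EReal)
    (hproper : ProperFn f) (hlsc : LowerSemicontinuous f)
    (z : ℕ → EuclideanSpace ℝ (Fin n))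
    (hz : ∀ m : ℕ, 1 ≤ m →
      f (z m) < ⨅ x : {x : EuclideanSpace ℝ (Fin n) // 1 / (m : ℝ) ≤ ‖x - z m‖}, f x) :
    CauchySeq z ∧ ∃ xbar, Tendsto z atTop (nhds xbar) ∧ StrongMinAt f xbar :=
  strong_min_from_localization_general f hlsc z hz
end

section
/- Let f, g : ℝⁿ → ℝ ∪ {∞} be proper, lower semicontinuous, and convex, and suppose Prox_f = k · Prox_g for some 0 < k < 1 (as single-valued maps on ℝⁿ). Then f is strongly convex. -/
open Filter Topology

/-- `p` is the proximal mapping of `f`: `p x` minimizes `y ↦ f y + ½‖y-x‖²`. -/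
def IsProxMap {n : ℕ} (f : EuclideanSpace ℝ (Fin n) → EReal)
    (p : EuclideanSpace ℝ (Fin n) → EuclideanSpace ℝ (Fin n)) : Prop :=
  ∀ x y, f (p x) + (((1 / 2 : ℝ) * ‖p x - x‖ ^ 2 : ℝ) : EReal) ≤
    f y + (((1 / 2 : ℝ) * ‖y - x‖ ^ 2 : ℝ) : EReal)

/-!
Since `Prox_g` is firmly nonexpansive, `Prox_f = k • Prox_g` makes `v = id - Prox_f`, the gradient
of the Moreau envelope `e` of `f`, strongly monotone with modulus `1 - k`. The envelope also obeys
the descent-lemma upper bound `e y ≤ e x + ⟪v x, y - x⟫ + ‖y - x‖² / 2`; summing the reversed bound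
along a fine subdivision of `[x, y]` upgrades it to the strong lower bound
`e x + ⟪v x, y - x⟫ + (1 - k) / 2 * ‖y - x‖² ≤ e y`. Comparing `e` at `w` and at
`w + (c - Prox_f w) / k` yields the strong subgradient inequality
`f c ≥ f p + ⟪w - p, c - p⟫ + σ / 2 * ‖c - p‖²` at every `p = Prox_f w`, with `σ = (1 - k) / k`.
Since `f` need not have a subgradient at `m = a • x + b • y`, these inequalities at `x` and `y` are
combined at `p = Prox_f (m + s)`, where `s` is the slope of an affine minorant of `f` that is almost
exact at `m` (Hahn–Banach on the closed epigraph).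
-/

open RealInnerProductSpace

theorem EReal.coe_mul_sub_coe_ne_bot {a : ℝ} (ha : 0 ≤ a) {x : EReal} (hx : x ≠ ⊥) (c : ℝ) :
    (a : EReal) * (x - c) ≠ ⊥ := by
  induction x using EReal.rec with
  | bot => exact absurd rfl hx
  | coe x => exact_mod_cast EReal.coe_ne_bot (a * (x - c))
  | top =>
    rw [EReal.top_sub_coe]
    rcases ha.eq_or_lt with rfl | ha
    · simp
    · simp [EReal.coe_mul_top_of_pos ha]

theorem le_of_forall_le_add_mul {a b c : ℝ} (h : ∀ t : ℝ, 0 < t → t ≤ 1 → a ≤ b + t * c) :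
    a ≤ b := by
  have hlim : Tendsto (fun t : ℝ => b + t * c) (𝓝[>] 0) (𝓝 b) := by
    have : Continuous fun t : ℝ => b + t * c := by fun_prop
    simpa using (this.tendsto 0).mono_left nhdsWithin_le_nhds
  refine ge_of_tendsto hlim ?_
  filter_upwards [Ioc_mem_nhdsGT one_pos] with t ht using h t ht.1 ht.2

section InnerProductSpace

variable {H : Type*} [NormedAddCommGroup H] [InnerProductSpace ℝ H]

theorem norm_smul_add_smul_sub_sq {a b : ℝ} (hab : a + b = 1) (x y p : H) :
    ‖a • x + b • y - p‖ ^ 2 + a * b * ‖x - y‖ ^ 2 = a * ‖x - p‖ ^ 2 + b * ‖y - p‖ ^ 2 := by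
  obtain rfl : b = 1 - a := by linarith
  have hp : a • x + (1 - a) • y - p = a • (x - p) + (1 - a) • (y - p) := by module
  have hxy : x - y = (x - p) - (y - p) := by abel
  rw [hp, hxy, norm_add_sq_real, norm_sub_sq_real, norm_smul, norm_smul, real_inner_smul_left,
    real_inner_smul_right, mul_pow, mul_pow, Real.norm_eq_abs, Real.norm_eq_abs, sq_abs, sq_abs]
  ring

theorem add_inner_add_sq_le_convex_combination {φx φy φq σ a b : ℝ} {x y q u : H} (ha : 0 ≤ a)
    (hb : 0 ≤ b) (hab : a + b = 1) (hx : φq + ⟪u, x - q⟫ + σ / 2 * ‖x - q‖ ^ 2 ≤ φx)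
    (hy : φq + ⟪u, y - q⟫ + σ / 2 * ‖y - q‖ ^ 2 ≤ φy) :
    φq + ⟪u, a • x + b • y - q⟫ + σ / 2 * (‖a • x + b • y - q‖ ^ 2 + a * b * ‖x - y‖ ^ 2)
      ≤ a * φx + b * φy := by
  obtain rfl : b = 1 - a := by linarith
  have hlin : ⟪u, a • x + (1 - a) • y - q⟫ = a * ⟪u, x - q⟫ + (1 - a) * ⟪u, y - q⟫ := by
    rw [← real_inner_smul_right, ← real_inner_smul_right, ← inner_add_right]
    congr 1
    module
  rw [hlin, norm_smul_add_smul_sub_sq hab]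
  nlinarith [mul_le_mul_of_nonneg_left hx ha, mul_le_mul_of_nonneg_left hy hb]

theorem inner_le_norm_sq_of_norm_sq_le_inner {u v : H} (h : ‖u‖ ^ 2 ≤ ⟪v, u⟫) :
    ⟪u, v⟫ ≤ ‖v‖ ^ 2 := by
  have hvu := real_inner_le_norm v u
  have huv := real_inner_le_norm u v
  nlinarith [norm_nonneg u, norm_nonneg v]

theorem stronglyMonotone_sub_smul {q : H → H} {k : ℝ} (hk : 0 ≤ k)
    (hq : ∀ x y, ⟪q x - q y, x - y⟫ ≤ ‖x - y‖ ^ 2) (x y : H) :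
    (1 - k) * ‖x - y‖ ^ 2 ≤ ⟪(x - k • q x) - (y - k • q y), x - y⟫ := by
  have hsplit : (x - k • q x) - (y - k • q y) = (x - y) - k • (q x - q y) := by module
  rw [hsplit, inner_sub_left, real_inner_smul_left, real_inner_self_eq_norm_sq]
  nlinarith [hq x y]

section StronglyMonotone

variable {Φ : H → ℝ} {v : H → H} {L μ : ℝ}

theorem le_apply_add_natCast_smul (hub : ∀ x y, Φ y ≤ Φ x + ⟪v x, y - x⟫ + L / 2 * ‖y - x‖ ^ 2)
    (hmono : ∀ x y, μ * ‖x - y‖ ^ 2 ≤ ⟪v x - v y, x - y⟫) (x d : H) (j : ℕ) :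
    Φ x + j * ⟪v x, d⟫ + (μ * (j * (j + 1) / 2) - L * j / 2) * ‖d‖ ^ 2
      ≤ Φ (x + (j : ℝ) • d) := by
  induction j with
  | zero => simp
  | succ j ih =>
    set x' := x + ((j + 1 : ℕ) : ℝ) • d
    have hstep : x + (j : ℝ) • d - x' = -d := by simp only [x']; push_cast; module
    have hx' : x' - x = ((j : ℝ) + 1) • d := by simp only [x']; push_cast; module
    have hback := hub x' (x + (j : ℝ) • d)
    rw [hstep, inner_neg_right, norm_neg] at hback
    have hgrow := hmono x' x
    rw [hx', real_inner_smul_right, inner_sub_left, norm_smul, mul_pow, Real.norm_eq_abs,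
      sq_abs] at hgrow
    have hgrow' : ⟪v x, d⟫ + μ * ((j : ℝ) + 1) * ‖d‖ ^ 2 ≤ ⟪v x', d⟫ := by
      have hj : (0 : ℝ) < (j : ℝ) + 1 := by positivity
      nlinarith
    push_cast
    nlinarith

theorem add_inner_add_sq_le_of_stronglyMonotone
    (hub : ∀ x y, Φ y ≤ Φ x + ⟪v x, y - x⟫ + L / 2 * ‖y - x‖ ^ 2)
    (hmono : ∀ x y, μ * ‖x - y‖ ^ 2 ≤ ⟪v x - v y, x - y⟫) (x y : H) :
    Φ x + ⟪v x, y - x⟫ + μ / 2 * ‖y - x‖ ^ 2 ≤ Φ y := by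
  have hN : ∀ N : ℕ, Φ x + ⟪v x, y - x⟫ + μ / 2 * ‖y - x‖ ^ 2
      + (μ - L) / 2 * ‖y - x‖ ^ 2 * (1 / ((N : ℝ) + 1)) ≤ Φ y := by
    intro N
    have hN0 : (N : ℝ) + 1 ≠ 0 := by positivity
    have h := le_apply_add_natCast_smul hub hmono x (((N : ℝ) + 1)⁻¹ • (y - x)) (N + 1)
    push_cast at h
    rw [smul_smul, mul_inv_cancel₀ hN0, one_smul, add_sub_cancel, real_inner_smul_right,
      norm_smul, mul_pow, norm_inv, Real.norm_of_nonneg (by positivity : (0 : ℝ) ≤ N + 1)] at h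
    convert h using 1
    field_simp
    ring
  have hlim : Tendsto (fun N : ℕ => Φ x + ⟪v x, y - x⟫ + μ / 2 * ‖y - x‖ ^ 2
      + (μ - L) / 2 * ‖y - x‖ ^ 2 * (1 / ((N : ℝ) + 1))) atTop
      (𝓝 (Φ x + ⟪v x, y - x⟫ + μ / 2 * ‖y - x‖ ^ 2)) := by
    have h := (tendsto_const_nhds (x := Φ x + ⟪v x, y - x⟫ + μ / 2 * ‖y - x‖ ^ 2)).add
      (tendsto_one_div_add_atTop_nhds_zero_nat.const_mul ((μ - L) / 2 * ‖y - x‖ ^ 2))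
    rwa [mul_zero, add_zero] at h
  exact le_of_tendsto' hlim hN

end StronglyMonotone

end InnerProductSpace

section Euclidean

variable {n : ℕ} {f : EuclideanSpace ℝ (Fin n) → EReal}
  {p : EuclideanSpace ℝ (Fin n) → EuclideanSpace ℝ (Fin n)}

theorem ProperFn.coe_toReal (hf : ProperFn f) {x : EuclideanSpace ℝ (Fin n)} (hx : f x ≠ ⊤) :
    ((f x).toReal : EReal) = f x :=
  EReal.coe_toReal hx (hf.1 x)

theorem ConvexFn.le_coe_toReal (hc : ConvexFn f) (hf : ProperFn f)
    {x y : EuclideanSpace ℝ (Fin n)} (hx : f x ≠ ⊤) (hy : f y ≠ ⊤) {a b : ℝ} (ha : 0 ≤ a)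
    (hb : 0 ≤ b) (hab : a + b = 1) :
    f (a • x + b • y) ≤ ((a * (f x).toReal + b * (f y).toReal : ℝ) : EReal) := by
  have h := hc x y a b ha hb hab
  rwa [← hf.coe_toReal hx, ← hf.coe_toReal hy, ← EReal.coe_mul, ← EReal.coe_mul,
    ← EReal.coe_add] at h

theorem ConvexFn.exists_affine_minorant (hc : ConvexFn f) (hf : ProperFn f)
    (hlsc : LowerSemicontinuous f) {m : EuclideanSpace ℝ (Fin n)} (hm : f m ≠ ⊤) {r : ℝ}
    (hr : (r : EReal) < f m) :
    ∃ (s : EuclideanSpace ℝ (Fin n)) (α : ℝ),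
      (∀ w, ((α + ⟪s, w⟫ : ℝ) : EReal) ≤ f w) ∧ r < α + ⟪s, m⟫ := by
  set S : Set (EuclideanSpace ℝ (Fin n) × ℝ) := {q | f q.1 ≤ q.2}
  have hS_closed : IsClosed S := hlsc.isClosed_epigraph.preimage
    (continuous_fst.prodMk (continuous_coe_real_ereal.comp continuous_snd))
  have hS_convex : Convex ℝ S := by
    rintro ⟨x, s⟩ (hx : f x ≤ s) ⟨y, t⟩ (hy : f y ≤ t) a b ha hb hab
    have hx' := EReal.toReal_le_toReal hx (hf.1 x) (EReal.coe_ne_top s)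
    have hy' := EReal.toReal_le_toReal hy (hf.1 y) (EReal.coe_ne_top t)
    rw [EReal.toReal_coe] at hx' hy'
    refine (hc.le_coe_toReal hf (ne_top_of_le_ne_top (EReal.coe_ne_top _) hx)
      (ne_top_of_le_ne_top (EReal.coe_ne_top _) hy) ha hb hab).trans ?_
    change _ ≤ ((a * s + b * t : ℝ) : EReal)
    gcongr
  obtain ⟨φ, u, hφm, hφS⟩ :=
    geometric_hahn_banach_point_closed hS_convex hS_closed (show (m, r) ∉ S from not_le.2 hr)
  set β := φ (0, 1)
  have hsplit : ∀ w t, φ (w, t) = φ (w, 0) + t * β := fun w t => by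
    rw [← smul_eq_mul, ← map_smul, ← map_add, Prod.smul_mk, smul_zero, smul_eq_mul, mul_one,
      Prod.mk_add_mk, add_zero, zero_add]
  have hmem : ∀ w, f w ≠ ⊤ → u < φ (w, 0) + (f w).toReal * β := fun w hw => by
    rw [← hsplit]
    exact hφS _ (show f w ≤ (f w).toReal from (hf.coe_toReal hw).ge)
  have hφm' : φ (m, 0) + r * β < u := hsplit m r ▸ hφm
  have hfm : r < (f m).toReal := by
    rwa [← hf.coe_toReal hm, EReal.coe_lt_coe_iff] at hr
  have hβ : 0 < β := by nlinarith [hmem m hm]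
  set s := -β⁻¹ • (InnerProductSpace.toDual ℝ _).symm (φ.comp (.inl ℝ _ ℝ))
  have hs : ∀ w, ⟪s, w⟫ = -β⁻¹ * φ (w, 0) := fun w => by
    rw [real_inner_smul_left, InnerProductSpace.toDual_symm_apply]
    rfl
  refine ⟨s, u / β, fun w => ?_, ?_⟩
  · rcases eq_or_ne (f w) ⊤ with hw | hw
    · simp [hw]
    · rw [← hf.coe_toReal hw, EReal.coe_le_coe_iff, hs, ← sub_nonneg]
      have := hmem w hw
      field_simp
      linarith
  · rw [hs, ← sub_pos]
    field_simp
    linarith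

theorem stronglyConvexFn_of_le_coe (hf : ProperFn f) {σ : ℝ} (hσ : 0 < σ)
    (h : ∀ x y a b, f x ≠ ⊤ → f y ≠ ⊤ → 0 < a → 0 < b → a + b = 1 →
      f (a • x + b • y) ≤ ((a * (f x).toReal + b * (f y).toReal - σ / 2 * (a * b * ‖x - y‖ ^ 2) : ℝ) : EReal)) :
    StronglyConvexFn f := by
  refine ⟨σ, hσ, fun x y a b ha hb hab => ?_⟩
  beta_reduce
  rcases ha.eq_or_lt with rfl | ha'
  · obtain rfl : b = 1 := by linarith
    simp
  rcases hb.eq_or_lt with rfl | hb'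
  · obtain rfl : a = 1 := by linarith
    simp
  rcases eq_or_ne (f x) ⊤ with hx | hx
  · rw [hx, EReal.top_sub_coe, EReal.coe_mul_top_of_pos ha',
      EReal.top_add_of_ne_bot (EReal.coe_mul_sub_coe_ne_bot hb (hf.1 y) _)]
    exact le_top
  rcases eq_or_ne (f y) ⊤ with hy | hy
  · rw [hy, EReal.top_sub_coe, EReal.coe_mul_top_of_pos hb',
      EReal.add_top_of_ne_bot (EReal.coe_mul_sub_coe_ne_bot ha (hf.1 x) _)]
    exact le_top
  have hsq := norm_smul_add_smul_sub_sq hab x y 0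
  simp only [sub_zero] at hsq
  calc f (a • x + b • y) - ((σ / 2 * ‖a • x + b • y‖ ^ 2 : ℝ) : EReal)
      ≤ ((a * (f x).toReal + b * (f y).toReal - σ / 2 * (a * b * ‖x - y‖ ^ 2)
          - σ / 2 * ‖a • x + b • y‖ ^ 2 : ℝ) : EReal) :=
        EReal.coe_sub _ _ ▸ EReal.sub_le_sub (h x y a b hx hy ha' hb' hab) le_rfl
    _ = (a : EReal) * (f x - ((σ / 2 * ‖x‖ ^ 2 : ℝ) : EReal))
          + (b : EReal) * (f y - ((σ / 2 * ‖y‖ ^ 2 : ℝ) : EReal)) := by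
        conv_rhs => rw [← hf.coe_toReal hx, ← hf.coe_toReal hy]
        norm_cast
        linear_combination -σ / 2 * hsq

namespace IsProxMap

theorem moreauEnv_eq (hp : IsProxMap f p) (x : EuclideanSpace ℝ (Fin n)) :
    moreauEnv f x = f (p x) + ((1 / 2 * ‖p x - x‖ ^ 2 : ℝ) : EReal) :=
  le_antisymm (iInf_le _ _) (le_iInf (hp x))

theorem apply_ne_top (hp : IsProxMap f p) (hf : ProperFn f) (x : EuclideanSpace ℝ (Fin n)) :
    f (p x) ≠ ⊤ := by
  obtain ⟨y, hy⟩ := hf.2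
  have h := (hp x y).trans_lt (EReal.add_lt_top hy (EReal.coe_ne_top _))
  intro htop
  rw [htop, EReal.top_add_coe] at h
  exact h.false

theorem toReal_add_le (hp : IsProxMap f p) (hf : ProperFn f) (x : EuclideanSpace ℝ (Fin n))
    {c : EuclideanSpace ℝ (Fin n)} (hc : f c ≠ ⊤) :
    (f (p x)).toReal + 1 / 2 * ‖p x - x‖ ^ 2 ≤ (f c).toReal + 1 / 2 * ‖c - x‖ ^ 2 := by
  have h := hp x c
  rwa [← hf.coe_toReal hc, ← hf.coe_toReal (hp.apply_ne_top hf x), ← EReal.coe_add,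
    ← EReal.coe_add, EReal.coe_le_coe_iff] at h

theorem toReal_moreauEnv (hp : IsProxMap f p) (hf : ProperFn f) (x : EuclideanSpace ℝ (Fin n)) :
    (moreauEnv f x).toReal = (f (p x)).toReal + 1 / 2 * ‖p x - x‖ ^ 2 := by
  rw [hp.moreauEnv_eq, ← hf.coe_toReal (hp.apply_ne_top hf x), ← EReal.coe_add, EReal.toReal_coe,
    EReal.toReal_coe]

theorem toReal_moreauEnv_le (hp : IsProxMap f p) (hf : ProperFn f) (x : EuclideanSpace ℝ (Fin n))
    {c : EuclideanSpace ℝ (Fin n)} (hc : f c ≠ ⊤) :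
    (moreauEnv f x).toReal ≤ (f c).toReal + 1 / 2 * ‖c - x‖ ^ 2 :=
  (hp.toReal_moreauEnv hf x).trans_le (hp.toReal_add_le hf x hc)

theorem toReal_moreauEnv_le_add (hp : IsProxMap f p) (hf : ProperFn f)
    (x y : EuclideanSpace ℝ (Fin n)) :
    (moreauEnv f y).toReal ≤ (moreauEnv f x).toReal + ⟪x - p x, y - x⟫ + 1 / 2 * ‖y - x‖ ^ 2 := by
  have h := hp.toReal_moreauEnv_le hf y (hp.apply_ne_top hf x)
  have hsq : ‖p x - y‖ ^ 2 = ‖p x - x‖ ^ 2 + 2 * ⟪x - p x, y - x⟫ + ‖y - x‖ ^ 2 := by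
    rw [show p x - y = -((x - p x) + (y - x)) by abel, norm_neg, norm_add_sq_real,
      norm_sub_rev]
  rw [hp.toReal_moreauEnv hf x]
  linarith

theorem toReal_add_inner_le (hp : IsProxMap f p) (hf : ProperFn f) (hc : ConvexFn f)
    (x : EuclideanSpace ℝ (Fin n)) {c : EuclideanSpace ℝ (Fin n)} (hfc : f c ≠ ⊤) :
    (f (p x)).toReal + ⟪x - p x, c - p x⟫ ≤ (f c).toReal := by
  set q := p x
  refine le_of_forall_le_add_mul (c := 1 / 2 * ‖c - q‖ ^ 2) fun t ht0 ht1 => ?_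
  have hseg := hc.le_coe_toReal hf (hp.apply_ne_top hf x) hfc (sub_nonneg.2 ht1) ht0.le
    (sub_add_cancel 1 t)
  have hseg_ne_top := ne_top_of_le_ne_top (EReal.coe_ne_top _) hseg
  have hseg_real := EReal.toReal_le_toReal hseg (hf.1 _) (EReal.coe_ne_top _)
  rw [EReal.toReal_coe] at hseg_real
  have hprox := hp.toReal_add_le hf x hseg_ne_top
  have hsq : ‖(1 - t) • q + t • c - x‖ ^ 2
      = ‖q - x‖ ^ 2 - 2 * t * ⟪x - q, c - q⟫ + t ^ 2 * ‖c - q‖ ^ 2 := by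
    rw [show (1 - t) • q + t • c - x = -(x - q) + t • (c - q) by module, norm_add_sq_real,
      norm_neg, inner_neg_left, real_inner_smul_right, norm_smul, mul_pow, Real.norm_eq_abs,
      sq_abs, norm_sub_rev]
    ring
  refine le_of_mul_le_mul_left ?_ ht0
  nlinarith

theorem norm_sub_sq_le_inner (hp : IsProxMap f p) (hf : ProperFn f) (hc : ConvexFn f)
    (x y : EuclideanSpace ℝ (Fin n)) : ‖p x - p y‖ ^ 2 ≤ ⟪x - y, p x - p y⟫ := by
  have hxy := hp.toReal_add_inner_le hf hc x (hp.apply_ne_top hf y)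
  have hyx := hp.toReal_add_inner_le hf hc y (hp.apply_ne_top hf x)
  have hsum : ⟪x - y, p x - p y⟫ - ‖p x - p y‖ ^ 2
      = -⟪x - p x, p y - p x⟫ - ⟪y - p y, p x - p y⟫ := by
    rw [← real_inner_self_eq_norm_sq]
    simp only [inner_sub_left, inner_sub_right, real_inner_comm]
    ring
  linarith

theorem toReal_add_inner_add_sq_le (hp : IsProxMap f p) (hf : ProperFn f) {μ : ℝ} (hμ : μ < 1)
    (hlow : ∀ x y, (moreauEnv f x).toReal + ⟪x - p x, y - x⟫ + μ / 2 * ‖y - x‖ ^ 2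
      ≤ (moreauEnv f y).toReal)
    (w : EuclideanSpace ℝ (Fin n)) {c : EuclideanSpace ℝ (Fin n)} (hc : f c ≠ ⊤) :
    (f (p w)).toReal + ⟪w - p w, c - p w⟫ + μ / (1 - μ) / 2 * ‖c - p w‖ ^ 2 ≤ (f c).toReal := by
  set q := p w
  set d := c - q
  -- Step size chosen so that the quadratic terms combine to exactly `μ / (1 - μ) * ‖d‖ ^ 2`.
  set t := (1 - μ)⁻¹
  have hlow_wz := hlow w (w + t • d)
  have hz := hp.toReal_moreauEnv_le hf (w + t • d) hc
  rw [hp.toReal_moreauEnv hf w, add_sub_cancel_left, real_inner_smul_right, norm_smul, mul_pow,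
    Real.norm_eq_abs, sq_abs, norm_sub_rev] at hlow_wz
  have hcz : ‖c - (w + t • d)‖ ^ 2
      = (1 - t) ^ 2 * ‖d‖ ^ 2 - 2 * (1 - t) * ⟪w - q, d⟫ + ‖w - q‖ ^ 2 := by
    rw [show c - (w + t • d) = (1 - t) • d - (w - q) by simp only [d]; module, norm_sub_sq_real,
      real_inner_smul_left, norm_smul, mul_pow, Real.norm_eq_abs, sq_abs, real_inner_comm]
    ring
  have hcoef : (μ * t ^ 2 - (1 - t) ^ 2) * ‖d‖ ^ 2 = μ / (1 - μ) * ‖d‖ ^ 2 := by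
    have : 1 - μ ≠ 0 := by linarith
    simp only [t]
    field_simp
    ring
  linarith

protected theorem stronglyConvexFn (hp : IsProxMap f p) (hf : ProperFn f) (hc : ConvexFn f)
    (hlsc : LowerSemicontinuous f) {σ : ℝ} (hσ : 0 < σ)
    (hsub : ∀ w c, f c ≠ ⊤ →
      (f (p w)).toReal + ⟪w - p w, c - p w⟫ + σ / 2 * ‖c - p w‖ ^ 2 ≤ (f c).toReal) :
    StronglyConvexFn f := by
  refine stronglyConvexFn_of_le_coe hf hσ fun x y a b hx hy ha hb hab => ?_
  set m := a • x + b • y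
  have hm : f m ≠ ⊤ :=
    ne_top_of_le_ne_top (EReal.coe_ne_top _) (hc.le_coe_toReal hf hx hy ha.le hb.le hab)
  by_contra hlt
  obtain ⟨s, α, hmin, hsm⟩ := hc.exists_affine_minorant hf hlsc hm (not_le.1 hlt)
  set q := p (m + s)
  have hq : α + ⟪s, q⟫ ≤ (f q).toReal := by
    have h := hmin q
    rwa [← hf.coe_toReal (hp.apply_ne_top hf _), EReal.coe_le_coe_iff] at h
  have hcomb := add_inner_add_sq_le_convex_combination ha.le hb.le hab (hsub (m + s) x hx)
    (hsub (m + s) y hy)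
  have hinner : ⟪m + s - q, m - q⟫ = ‖m - q‖ ^ 2 + (⟪s, m⟫ - ⟪s, q⟫) := by
    rw [show m + s - q = (m - q) + s by abel, inner_add_left, real_inner_self_eq_norm_sq,
      inner_sub_right]
  rw [hinner] at hcomb
  nlinarith [sq_nonneg ‖m - q‖]

end IsProxMap

end Euclidean

theorem stronglyConvex_of_prox_scaled_general {n : ℕ}
    (f g : EuclideanSpace ℝ (Fin n) → EReal)
    (hfp : ProperFn f) (hflsc : LowerSemicontinuous f) (hfc : ConvexFn f)
    (hgp : ProperFn g) (hgc : ConvexFn g)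
    (proxF proxG : EuclideanSpace ℝ (Fin n) → EuclideanSpace ℝ (Fin n))
    (hproxF : IsProxMap f proxF) (hproxG : IsProxMap g proxG)
    (k : ℝ) (hk0 : 0 < k) (hk1 : k < 1)
    (hEq : ∀ x, proxF x = k • proxG x) :
    StronglyConvexFn f := by
  have hproxG_le : ∀ x y, ⟪proxG x - proxG y, x - y⟫ ≤ ‖x - y‖ ^ 2 := fun x y =>
    inner_le_norm_sq_of_norm_sq_le_inner (hproxG.norm_sub_sq_le_inner hgp hgc x y)
  have hmono : ∀ x y, (1 - k) * ‖x - y‖ ^ 2 ≤ ⟪(x - proxF x) - (y - proxF y), x - y⟫ := by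
    simpa only [hEq] using stronglyMonotone_sub_smul hk0.le hproxG_le
  have hlow := add_inner_add_sq_le_of_stronglyMonotone
    (hproxF.toReal_moreauEnv_le_add hfp) hmono
  have hsub := hproxF.toReal_add_inner_add_sq_le hfp (by linarith : 1 - k < 1) hlow
  exact hproxF.stronglyConvexFn hfp hfc hflsc (div_pos (by linarith) (by linarith)) hsub

theorem stronglyConvex_of_prox_scaled {n : ℕ}
    (f g : EuclideanSpace ℝ (Fin n) → EReal)
    (hfp : ProperFn f) (hflsc : LowerSemicontinuous f) (hfc : ConvexFn f)
    (hgp : ProperFn g) (hglsc : LowerSemicontinuous g) (hgc : ConvexFn g)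
    (proxF proxG : EuclideanSpace ℝ (Fin n) → EuclideanSpace ℝ (Fin n))
    (hproxF : IsProxMap f proxF) (hproxG : IsProxMap g proxG)
    (k : ℝ) (hk0 : 0 < k) (hk1 : k < 1)
    (hEq : ∀ x, proxF x = k • proxG x) :
    StronglyConvexFn f :=
  stronglyConvex_of_prox_scaled_general f g hfp hflsc hfc hgp hgc proxF proxG hproxF hproxG k hk0
    hk1 hEq
end

section
/- Let f : ℝⁿ → ℝ ∪ {∞} be proper, lower semicontinuous, and convex with Moreau envelope g = e₁f. Suppose that for some x̄ and every k ∈ ℕ there exists x_k ≠ x̄ with f(x_k) < f(x̄) + 1/k, where x̄ minimizes f. Then for h_k := max{f, f(x̄) + 1/k}, we have e₁f ≤ e₁h_k ≤ e₁f + 1/k, and h_k does not have a strong minimizer. -/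
open Filter Topology

/-! Truncating `f` at the level `f x̄ + 1/k` raises it by at most `1/k` (as `x̄` minimizes `f`);
since the Moreau envelope is monotone and shifts with additive constants, this gives the two
envelope bounds. The truncation is constant, equal to its minimum, on the sublevel set
`{f ≤ f x̄ + 1/k}`, which contains the two distinct points `x̄` and `x k`; constant sequences
at either point are minimizing, so a strong minimizer would have to equal both. -/

lemma EReal.iInf_add_coe_le {α : Type*} (g : α → EReal) (c : ℝ) :
    ⨅ y, (g y + c) ≤ (⨅ y, g y) + c := by
  rw [← EReal.sub_le_iff_le_add (.inl (EReal.coe_ne_bot c)) (.inl (EReal.coe_ne_top c))]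
  refine le_iInf fun y => ?_
  rw [EReal.sub_le_iff_le_add (.inl (EReal.coe_ne_bot c)) (.inl (EReal.coe_ne_top c))]
  exact iInf_le _ y

section

variable {n : ℕ}

lemma moreauEnv_mono {f g : EuclideanSpace ℝ (Fin n) → EReal} (hfg : ∀ w, f w ≤ g w)
    (u : EuclideanSpace ℝ (Fin n)) : moreauEnv f u ≤ moreauEnv g u :=
  iInf_mono fun y => add_le_add_left (hfg y) _

lemma moreauEnv_add_const_le (f : EuclideanSpace ℝ (Fin n) → EReal) (c : ℝ)
    (u : EuclideanSpace ℝ (Fin n)) : moreauEnv (fun w => f w + c) u ≤ moreauEnv f u + c := by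
  refine le_trans (le_of_eq ?_) (EReal.iInf_add_coe_le _ c)
  refine iInf_congr fun y => ?_
  rw [add_assoc, add_assoc, add_comm (c : EReal)]

lemma moreauEnv_le_add_const {f g : EuclideanSpace ℝ (Fin n) → EReal} {c : ℝ}
    (hgf : ∀ w, g w ≤ f w + c) (u : EuclideanSpace ℝ (Fin n)) :
    moreauEnv g u ≤ moreauEnv f u + c :=
  (moreauEnv_mono hgf u).trans (moreauEnv_add_const_le f c u)

lemma StrongMinAt.eq_of_isMin {h : EuclideanSpace ℝ (Fin n) → EReal}
    {z w : EuclideanSpace ℝ (Fin n)} (hz : StrongMinAt h z) (hw : ∀ x, h w ≤ h x) : w = z := by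
  have hwz : h w = h z := le_antisymm (hw z) (hz.1 w)
  have hconst : Tendsto (fun _ : ℕ => w) atTop (𝓝 z) :=
    hz.2 _ (by simpa only [hwz] using tendsto_const_nhds)
  exact tendsto_nhds_unique tendsto_const_nhds hconst

lemma not_strongMinAt_of_isMin {h : EuclideanSpace ℝ (Fin n) → EReal}
    {w₁ w₂ : EuclideanSpace ℝ (Fin n)} (hne : w₁ ≠ w₂)
    (hw₁ : ∀ x, h w₁ ≤ h x) (hw₂ : ∀ x, h w₂ ≤ h x) : ¬ ∃ z, StrongMinAt h z :=
  fun ⟨_, hz⟩ => hne ((hz.eq_of_isMin hw₁).trans (hz.eq_of_isMin hw₂).symm)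

end

lemma max_const_le_max_const_of_le {α β : Type*} [LinearOrder β] (f : α → β) {c : β} {w : α}
    (hw : f w ≤ c) (x : α) : max (f w) c ≤ max (f x) c := by
  rw [max_eq_right hw]
  exact le_max_right _ _

lemma max_add_coe_le_add_coe {a b : EReal} {c : ℝ} (hc : 0 ≤ c) (hab : b ≤ a) :
    max a (b + c) ≤ a + c :=
  max_le (le_add_of_nonneg_right (EReal.coe_nonneg.mpr hc)) (add_le_add_left hab _)

theorem truncation_no_strong_minimizer_general {n : ℕ}
    (f : EuclideanSpace ℝ (Fin n) → EReal)
    (xbar : EuclideanSpace ℝ (Fin n)) (hmin : ∀ x, f xbar ≤ f x)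
    (x : ℕ → EuclideanSpace ℝ (Fin n))
    (hx : ∀ k : ℕ, 1 ≤ k → x k ≠ xbar ∧ f (x k) < f xbar + ((1 / (k : ℝ) : ℝ) : EReal)) :
    ∀ k : ℕ, 1 ≤ k →
      (∀ u, moreauEnv f u ≤
          moreauEnv (fun w => max (f w) (f xbar + ((1 / (k : ℝ) : ℝ) : EReal))) u) ∧
      (∀ u, moreauEnv (fun w => max (f w) (f xbar + ((1 / (k : ℝ) : ℝ) : EReal))) u ≤
          moreauEnv f u + ((1 / (k : ℝ) : ℝ) : EReal)) ∧
      ¬ ∃ z, StrongMinAt (fun w => max (f w) (f xbar + ((1 / (k : ℝ) : ℝ) : EReal))) z := by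
  intro k hk
  obtain ⟨hne, hlt⟩ := hx k hk
  have hk0 : (0 : ℝ) ≤ 1 / (k : ℝ) := by positivity
  have hxbar_le : f xbar ≤ f xbar + ((1 / (k : ℝ) : ℝ) : EReal) :=
    le_add_of_nonneg_right (EReal.coe_nonneg.mpr hk0)
  refine ⟨moreauEnv_mono fun w => le_max_left _ _,
    moreauEnv_le_add_const fun w => max_add_coe_le_add_coe hk0 (hmin w), ?_⟩
  exact not_strongMinAt_of_isMin hne (max_const_le_max_const_of_le f hlt.le)
    (max_const_le_max_const_of_le f hxbar_le)

theorem truncation_no_strong_minimizer {n : ℕ}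
    (f : EuclideanSpace ℝ (Fin n) → EReal)
    (hproper : ProperFn f) (hlsc : LowerSemicontinuous f) (hconv : ConvexFn f)
    (xbar : EuclideanSpace ℝ (Fin n)) (hmin : ∀ x, f xbar ≤ f x)
    (x : ℕ → EuclideanSpace ℝ (Fin n))
    (hx : ∀ k : ℕ, 1 ≤ k → x k ≠ xbar ∧ f (x k) < f xbar + ((1 / (k : ℝ) : ℝ) : EReal)) :
    ∀ k : ℕ, 1 ≤ k →
      (∀ u, moreauEnv f u ≤
          moreauEnv (fun w => max (f w) (f xbar + ((1 / (k : ℝ) : ℝ) : EReal))) u) ∧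
      (∀ u, moreauEnv (fun w => max (f w) (f xbar + ((1 / (k : ℝ) : ℝ) : EReal))) u ≤
          moreauEnv f u + ((1 / (k : ℝ) : ℝ) : EReal)) ∧
      ¬ ∃ z, StrongMinAt (fun w => max (f w) (f xbar + ((1 / (k : ℝ) : ℝ) : EReal))) z :=
  truncation_no_strong_minimizer_general f xbar hmin x hx
end

section
/- Let f, g : ℝⁿ → ℝ ∪ {∞} be proper, lower semicontinuous, and convex. If e₁f = e₁g (the Moreau envelopes with parameter 1 agree everywhere), then f = g. -/
open Filter Topology

/-!
Since `½‖z - x‖² = ½‖z‖² - ⟪x, z⟫ + ½‖x‖²`, the inequality `b + ½‖x‖² ≤ e₁f(x)` says exactly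
that `z ↦ ⟪x, z⟫ + b` is an affine minorant of `f + ½‖·‖²`. So `e₁f ≤ e₁g` means that every
affine minorant of `f + ½‖·‖²` is one of `g + ½‖·‖²`. For proper, lower semicontinuous and
convex `f`, the function `f + ½‖·‖²` is again such, hence (Hahn–Banach applied to its closed
convex epigraph) the supremum of its continuous affine minorants; therefore `f ≤ g`.
Exchanging `f` and `g` gives `f = g`.
-/

open Set

section RealEpigraph

variable {E : Type*} {F : E → EReal}

/-- Heights range over `ℝ`, so the points where `F = ⊤` do not show up. -/
def realEpigraph (F : E → EReal) : Set (E × ℝ) := {p | F p.1 ≤ p.2}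

theorem mem_realEpigraph {p : E × ℝ} : p ∈ realEpigraph F ↔ F p.1 ≤ p.2 := Iff.rfl

theorem LowerSemicontinuous.isClosed_realEpigraph [TopologicalSpace E]
    (hF : LowerSemicontinuous F) : IsClosed (realEpigraph F) :=
  hF.isClosed_epigraph.preimage
    (continuous_fst.prodMk (continuous_coe_real_ereal.comp continuous_snd))

theorem realEpigraph_add (g : E → ℝ) :
    realEpigraph (fun z => F z + g z) = (fun p => (p.1, p.2 - g p.1)) ⁻¹' realEpigraph F := by
  ext ⟨z, t⟩
  simp only [mem_preimage, mem_realEpigraph, EReal.coe_sub]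
  exact (EReal.le_sub_iff_add_le (by simp) (by simp)).symm

theorem IsClosed.realEpigraph_add [TopologicalSpace E] (hF : IsClosed (realEpigraph F))
    {g : E → ℝ} (hg : Continuous g) : IsClosed (realEpigraph fun z => F z + g z) := by
  rw [_root_.realEpigraph_add]
  exact hF.preimage (continuous_fst.prodMk (continuous_snd.sub (hg.comp continuous_fst)))

theorem Convex.realEpigraph_add [AddCommGroup E] [Module ℝ E] (hF : Convex ℝ (realEpigraph F))
    {g : E → ℝ} (hg : ConvexOn ℝ univ g) : Convex ℝ (realEpigraph fun z => F z + g z) := by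
  rw [_root_.realEpigraph_add]
  rintro ⟨z₁, t₁⟩ h₁ ⟨z₂, t₂⟩ h₂ a b ha hb hab
  have hmem := hF h₁ h₂ ha hb hab
  simp only [mem_preimage, mem_realEpigraph, Prod.smul_mk, Prod.mk_add_mk, smul_eq_mul] at hmem ⊢
  refine hmem.trans (EReal.coe_le_coe_iff.2 ?_)
  have hg' := hg.2 (mem_univ z₁) (mem_univ z₂) ha hb hab
  simp only [smul_eq_mul] at hg'
  linarith

section AffineMinorant

variable [AddCommGroup E] [Module ℝ E] [TopologicalSpace E]

def IsAffineMinorant (F : E → EReal) (φ : E →L[ℝ] ℝ) (b : ℝ) : Prop :=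
  ∀ z, ((φ z + b : ℝ) : EReal) ≤ F z

theorem isAffineMinorant_of_forall_mem_realEpigraph {φ : E →L[ℝ] ℝ} {b : ℝ}
    (h : ∀ p ∈ realEpigraph F, φ p.1 + b ≤ p.2) : IsAffineMinorant F φ b := fun z =>
  EReal.le_of_forall_lt_iff_le.1 fun t ht => EReal.coe_le_coe_iff.2 (h (z, t) ht.le)

theorem exists_isAffineMinorant_gt_of_separation {ψ : E →L[ℝ] ℝ} {s u r : ℝ} {y : E}
    (hs : 0 < s) (hy : ψ y + r * s < u) (h : ∀ p ∈ realEpigraph F, u < ψ p.1 + p.2 * s) :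
    ∃ φ b, IsAffineMinorant F φ b ∧ r < φ y + b := by
  have hval (z : E) : (-s⁻¹ • ψ) z + u / s = (u - ψ z) / s := by
    simp only [smul_apply, smul_eq_mul]
    field_simp
    ring
  refine ⟨-s⁻¹ • ψ, u / s, isAffineMinorant_of_forall_mem_realEpigraph fun p hp => ?_, ?_⟩
  · rw [hval, div_le_iff₀ hs]
    linarith [h p hp]
  · rw [hval, lt_div_iff₀ hs]
    linarith

theorem IsAffineMinorant.sub_smul_of_separation {φ ψ : E →L[ℝ] ℝ} {b c u : ℝ}
    (hφ : IsAffineMinorant F φ b) (hc : 0 ≤ c) (h : ∀ p ∈ realEpigraph F, u < ψ p.1) :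
    IsAffineMinorant F (φ - c • ψ) (b + c * u) := by
  refine isAffineMinorant_of_forall_mem_realEpigraph fun p hp => ?_
  have h₁ : φ p.1 + b ≤ p.2 := EReal.coe_le_coe_iff.1 ((hφ p.1).trans hp)
  have h₂ := mul_le_mul_of_nonneg_left (h p hp).le hc
  simp only [sub_apply, smul_apply, smul_eq_mul]
  linarith

variable [IsTopologicalAddGroup E] [ContinuousSMul ℝ E] [LocallyConvexSpace ℝ E]

theorem exists_separation_of_lt (hclosed : IsClosed (realEpigraph F))
    (hconv : Convex ℝ (realEpigraph F)) (hne : (realEpigraph F).Nonempty) {y : E} {r : ℝ}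
    (hr : (r : EReal) < F y) :
    ∃ (ψ : E →L[ℝ] ℝ) (s u : ℝ), 0 ≤ s ∧ ψ y + r * s < u ∧
      ∀ p ∈ realEpigraph F, u < ψ p.1 + p.2 * s := by
  have hout : (y, r) ∉ realEpigraph F := not_le.2 hr
  obtain ⟨φ, u, hy, hepi⟩ := geometric_hahn_banach_point_closed hconv hclosed hout
  set ψ := φ.comp (.inl ℝ E ℝ)
  set s := φ (0, 1)
  have hφ (p : E × ℝ) : φ p = ψ p.1 + p.2 * s := by
    rw [ContinuousLinearMap.comp_apply, ContinuousLinearMap.inl_apply, ← smul_eq_mul, ← map_smul,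
      ← map_add]
    congr 1
    ext <;> simp
  simp only [hφ] at hy hepi
  refine ⟨ψ, s, u, ?_, hy, hepi⟩
  -- the epigraph is closed upwards, so `s < 0` would make `ψ x₀ + t * s` fall below `u`
  obtain ⟨⟨x₀, t₀⟩, h₀⟩ := hne
  by_contra! hs
  set t := max t₀ ((u - ψ x₀) / s)
  have hmem : (x₀, t) ∈ realEpigraph F := h₀.trans (EReal.coe_le_coe_iff.2 (le_max_left _ _))
  have ht := (div_le_iff_of_neg hs).1 (le_max_right _ _ : _ ≤ t)
  linarith [hepi _ hmem]

theorem exists_isAffineMinorant_gt_of_eq_coe (hclosed : IsClosed (realEpigraph F))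
    (hconv : Convex ℝ (realEpigraph F)) {y : E} {T r : ℝ} (hy : F y = T) (hr : r < T) :
    ∃ φ b, IsAffineMinorant F φ b ∧ r < φ y + b := by
  have hmem : (y, T) ∈ realEpigraph F := hy.le
  obtain ⟨ψ, s, u, -, hyu, hepi⟩ :=
    exists_separation_of_lt hclosed hconv ⟨_, hmem⟩ (hy ▸ EReal.coe_lt_coe_iff.2 hr)
  have hs : 0 < s := by nlinarith [hepi _ hmem]
  exact exists_isAffineMinorant_gt_of_separation hs hyu hepi

theorem exists_isAffineMinorant_gt (hclosed : IsClosed (realEpigraph F))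
    (hconv : Convex ℝ (realEpigraph F)) {x₀ : E} {t₀ : ℝ} (h₀ : F x₀ = t₀) {y : E} {r : ℝ}
    (hr : (r : EReal) < F y) :
    ∃ φ b, IsAffineMinorant F φ b ∧ r < φ y + b := by
  obtain ⟨ψ, s, u, hs, hy, hepi⟩ := exists_separation_of_lt hclosed hconv ⟨(x₀, t₀), h₀.le⟩ hr
  rcases hs.lt_or_eq with hs | rfl
  · exact exists_isAffineMinorant_gt_of_separation hs hy hepi
  -- A vertical hyperplane separates `y` from the domain: tilt a minorant through `x₀` along `ψ`.
  simp only [mul_zero, add_zero] at hy hepi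
  obtain ⟨φ, b, hφ, -⟩ := exists_isAffineMinorant_gt_of_eq_coe hclosed hconv h₀ (sub_one_lt t₀)
  set c := (|r - (φ y + b)| + 1) / (u - ψ y)
  have hc : c * (u - ψ y) = |r - (φ y + b)| + 1 := div_mul_cancel₀ _ (by linarith)
  refine ⟨_, _, hφ.sub_smul_of_separation (c := c) (by positivity) hepi, ?_⟩
  simp only [sub_apply, smul_apply, smul_eq_mul]
  linarith [le_abs_self (r - (φ y + b))]

theorem le_of_forall_isAffineMinorant {G : E → EReal} (hclosed : IsClosed (realEpigraph F))
    (hconv : Convex ℝ (realEpigraph F)) {x₀ : E} {t₀ : ℝ} (h₀ : F x₀ = t₀)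
    (h : ∀ φ b, IsAffineMinorant F φ b → IsAffineMinorant G φ b) : F ≤ G := by
  intro y
  by_contra! hlt
  obtain ⟨r, hGr, hrF⟩ := EReal.exists_between_coe_real hlt
  obtain ⟨φ, b, hφ, hr⟩ := exists_isAffineMinorant_gt hclosed hconv h₀ hrF
  exact (h φ b hφ y).not_gt (hGr.trans (EReal.coe_lt_coe_iff.2 hr))

end AffineMinorant

end RealEpigraph

section Euclidean

variable {n : ℕ} {f g : EuclideanSpace ℝ (Fin n) → EReal}

theorem ConvexFn.convex_realEpigraph (hf : ConvexFn f) : Convex ℝ (realEpigraph f) := by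
  rintro ⟨z₁, t₁⟩ h₁ ⟨z₂, t₂⟩ h₂ a b ha hb hab
  refine (hf z₁ z₂ a b ha hb hab).trans ?_
  calc (a : EReal) * f z₁ + b * f z₂ ≤ a * t₁ + b * t₂ :=
        add_le_add (mul_le_mul_of_nonneg_left h₁ (EReal.coe_nonneg.2 ha))
          (mul_le_mul_of_nonneg_left h₂ (EReal.coe_nonneg.2 hb))
    _ = ((a * t₁ + b * t₂ : ℝ) : EReal) := by norm_cast

theorem isAffineMinorant_add_half_sq_iff (v : EuclideanSpace ℝ (Fin n)) (b : ℝ) :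
    IsAffineMinorant (fun z => f z + (((1 / 2 : ℝ) * ‖z‖ ^ 2 : ℝ) : EReal)) (innerSL ℝ v) b ↔
      ((b + 1 / 2 * ‖v‖ ^ 2 : ℝ) : EReal) ≤ moreauEnv f v := by
  simp only [IsAffineMinorant, moreauEnv, le_iInf_iff, innerSL_apply_apply]
  refine forall_congr' fun z => ?_
  set k := 1 / 2 * ‖v‖ ^ 2 - inner ℝ v z
  have hk : (1 / 2 : ℝ) * ‖z - v‖ ^ 2 = 1 / 2 * ‖z‖ ^ 2 + k := by
    rw [norm_sub_sq_real, real_inner_comm]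
    ring
  have hb : inner ℝ v z + b + k = b + 1 / 2 * ‖v‖ ^ 2 := by ring
  rw [← (EReal.addLECancellable_coe k).add_le_add_iff_right, add_assoc, ← EReal.coe_add,
    ← EReal.coe_add, hb, hk]

theorem le_of_moreauEnv_le (hfp : ProperFn f) (hfl : LowerSemicontinuous f) (hfc : ConvexFn f)
    (h : moreauEnv f ≤ moreauEnv g) : f ≤ g := by
  obtain ⟨hbot, x₀, hx₀⟩ := hfp
  have hq : Continuous fun z : EuclideanSpace ℝ (Fin n) => (1 / 2 : ℝ) * ‖z‖ ^ 2 := by fun_prop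
  have hqc : ConvexOn ℝ univ fun z : EuclideanSpace ℝ (Fin n) => (1 / 2 : ℝ) * ‖z‖ ^ 2 :=
    (convexOn_univ_norm.pow (fun _ _ => norm_nonneg _) 2).smul (by norm_num)
  have hfin : f x₀ + (((1 / 2 : ℝ) * ‖x₀‖ ^ 2 : ℝ) : EReal) =
      ((f x₀).toReal + 1 / 2 * ‖x₀‖ ^ 2 : ℝ) := by
    rw [EReal.coe_add, EReal.coe_toReal hx₀ (hbot x₀)]
  have hle : (fun z => f z + (((1 / 2 : ℝ) * ‖z‖ ^ 2 : ℝ) : EReal)) ≤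
      fun z => g z + (((1 / 2 : ℝ) * ‖z‖ ^ 2 : ℝ) : EReal) := by
    refine le_of_forall_isAffineMinorant (hfl.isClosed_realEpigraph.realEpigraph_add hq)
      (hfc.convex_realEpigraph.realEpigraph_add hqc) hfin fun φ b hφ => ?_
    obtain ⟨v, rfl⟩ : ∃ v, innerSL ℝ v = φ :=
      ⟨(InnerProductSpace.toDual ℝ _).symm φ, by ext; simp⟩
    rw [isAffineMinorant_add_half_sq_iff] at hφ ⊢
    exact hφ.trans (h v)
  exact fun z => (EReal.addLECancellable_coe _).add_le_add_iff_right.1 (hle z)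

end Euclidean

theorem moreau_injective {n : ℕ}
    (f g : EuclideanSpace ℝ (Fin n) → EReal)
    (hfp : ProperFn f) (hflsc : LowerSemicontinuous f) (hfc : ConvexFn f)
    (hgp : ProperFn g) (hglsc : LowerSemicontinuous g) (hgc : ConvexFn g)
    (h : moreauEnv f = moreauEnv g) :
    f = g :=
  le_antisymm (le_of_moreauEnv_le hfp hflsc hfc h.le) (le_of_moreauEnv_le hgp hglsc hgc h.ge)
end
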